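/- arXiv:2210.13315 — 3 statements merged into one kernel-verified Lean document; each statement's English description precedes it below -/
import Mathlib

section
/- Let 0 < ε ≤ 1/N, N ≥ 2 even, α > 0, σ > 0, and define the Bakhvalov-type mesh transition point τ = (σε/α)·(−ln(1−2(1−ε)·(1/2))) = (σε/α)·ln(1/ε) via the mesh-generating function φ(t) = −ln(1−2(1−ε)t). Then for the mesh points x_i = 1 − (σε/α)φ(1 − i/N) with i = N/2,…,N, the element widths h_j = x_j − x_{j−1} satisfy h_{N/2+j} ≥ σε/(α(j+1)) for all j = 1,…,N/2. -/
/-!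
With `N = 2M` the mesh point `x_{M+k}` equals `1 + (σε/α) log((εM + (1-ε)k)/M)`, so the width
`h_{M+j}` is `σε/α` times `log a - log (a - (1-ε))` with `a = εM + (1-ε)j`. The bound
`log a - log b ≥ (a - b)/a` and `a ≤ (1-ε)(j+1)`, which is `ε(M+1) ≤ 1`, give the claim.
-/

open Real

lemma Real.sub_div_le_log_sub_log {a b : ℝ} (ha : 0 < a) (hb : 0 < b) :
    (a - b) / a ≤ log a - log b := by
  have h := one_sub_inv_le_log_of_pos (div_pos ha hb)
  rwa [inv_div, log_div ha.ne' hb.ne', one_sub_div ha.ne'] at h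

lemma bakhvalov_mesh_point_eq (c : ℝ) {ε M t : ℝ} (hε : 0 < ε) (hε1 : ε < 1) (hM : 0 < M)
    (ht : 0 ≤ t) :
    1 - c * -log (1 - 2 * (1 - ε) * (1 - (M + t) / (M + M))) =
      1 + c * (log (ε * M + (1 - ε) * t) - log M) := by
  have harg : 0 < ε * M + (1 - ε) * t := by nlinarith
  have hsimp : 1 - 2 * (1 - ε) * (1 - (M + t) / (M + M)) = (ε * M + (1 - ε) * t) / M := by
    field_simp
    ring
  rw [hsimp, log_div harg.ne' hM.ne']
  ring

lemma inv_add_two_le_log_sub_log_bakhvalov {ε M t : ℝ} (hε : 0 < ε) (hM : 0 < M)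
    (hεM : ε * (M + 1) ≤ 1) (ht : 0 ≤ t) :
    1 / (t + 1 + 1) ≤ log (ε * M + (1 - ε) * (t + 1)) - log (ε * M + (1 - ε) * t) := by
  have hε1 : 0 < 1 - ε := by nlinarith
  have hb : 0 < ε * M + (1 - ε) * t := by nlinarith
  have ha : 0 < ε * M + (1 - ε) * (t + 1) := by nlinarith
  calc 1 / (t + 1 + 1) ≤ (1 - ε) / (ε * M + (1 - ε) * (t + 1)) := by
        rw [div_le_div_iff₀ (by linarith) ha]
        nlinarith
    _ = ((ε * M + (1 - ε) * (t + 1)) - (ε * M + (1 - ε) * t)) / (ε * M + (1 - ε) * (t + 1)) := by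
        ring_nf
    _ ≤ _ := Real.sub_div_le_log_sub_log ha hb

theorem bmesh_width_lower_bound_general
    (N : ℕ) (hNeven : Even N)
    (ε α σ : ℝ) (hε : 0 < ε) (hεN : ε ≤ 1 / N) (hα : 0 < α) (hσ : 0 < σ)
    (φ : ℝ → ℝ) (hφ : ∀ t : ℝ, φ t = -Real.log (1 - 2 * (1 - ε) * t))
    (x : ℕ → ℝ)
    (hx : ∀ i : ℕ, N / 2 ≤ i → i ≤ N → x i = 1 - (σ * ε / α) * φ (1 - (i : ℝ) / N)) :
    ∀ j : ℕ, 1 ≤ j → j ≤ N / 2 →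
      x (N / 2 + j) - x (N / 2 + j - 1) ≥ σ * ε / (α * (j + 1)) := by
  intro j hj hjN
  obtain ⟨M, rfl⟩ := hNeven
  obtain ⟨k, rfl⟩ : ∃ k, j = k + 1 := ⟨j - 1, by omega⟩
  rw [show (M + M) / 2 = M by omega] at hx hjN ⊢
  -- `1 / 0 = 0` in `ℝ`, so `0 < ε ≤ 1 / N` already rules out `N = 0`.
  have hM : M ≠ 0 := by
    rintro rfl
    simp only [Nat.cast_zero, add_zero, div_zero] at hεN
    linarith
  have hM1 : (1 : ℝ) ≤ M := by exact_mod_cast Nat.one_le_iff_ne_zero.mpr hM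
  have hεM : ε * (M + 1) ≤ 1 := by
    rw [Nat.cast_add, le_div_iff₀ (by linarith)] at hεN
    nlinarith
  have hmesh : ∀ i : ℕ, i ≤ M →
      x (M + i) = 1 + σ * ε / α * (log (ε * M + (1 - ε) * i) - log M) := by
    intro i hi
    rw [hx (M + i) (by omega) (by omega), hφ, Nat.cast_add, Nat.cast_add]
    exact bakhvalov_mesh_point_eq _ hε (by nlinarith) (by positivity) i.cast_nonneg
  rw [show M + (k + 1) - 1 = M + k by omega, hmesh _ hjN, hmesh k (by omega), ge_iff_le]
  push_cast
  calc σ * ε / (α * (k + 1 + 1)) = σ * ε / α * (1 / (k + 1 + 1)) := by field_simp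
    _ ≤ σ * ε / α * (log (ε * M + (1 - ε) * (k + 1)) - log (ε * M + (1 - ε) * k)) := by
        gcongr
        exact inv_add_two_le_log_sub_log_bakhvalov hε (by positivity) hεM k.cast_nonneg
    _ = _ := by ring

/-- Bakhvalov-type mesh lower bound `h_{N/2+j} ≥ σε/(α(j+1))`. -/
theorem bmesh_width_lower_bound
    (N : ℕ) (hN : 2 ≤ N) (hNeven : Even N)
    (ε α σ : ℝ) (hε : 0 < ε) (hεN : ε ≤ 1 / N) (hα : 0 < α) (hσ : 0 < σ)
    (φ : ℝ → ℝ) (hφ : ∀ t : ℝ, φ t = -Real.log (1 - 2 * (1 - ε) * t))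
    (x : ℕ → ℝ)
    (hx : ∀ i : ℕ, N / 2 ≤ i → i ≤ N → x i = 1 - (σ * ε / α) * φ (1 - (i : ℝ) / N)) :
    ∀ j : ℕ, 1 ≤ j → j ≤ N / 2 →
      x (N / 2 + j) - x (N / 2 + j - 1) ≥ σ * ε / (α * (j + 1)) :=
  bmesh_width_lower_bound_general N hNeven ε α σ hε hεN hα hσ φ hφ x hx
end

section
/- Let ψ: [0,1/2] → (0,1] be continuously differentiable and decreasing with ψ = e^{−φ}, where φ is increasing with φ(0)=0. For the mesh x_j = 1 − (σε/α)φ(1 − j/N), j = N/2,…,N, with h_j = x_j − x_{j−1}, define 𝒢_j = min{h_j/ε, 1}·ψ(1 − j/N). Then ∑_{j=N/2+1}^{N} 𝒢_j ≤ (σ/α)·∑_{j=N/2+1}^{N} ∫_{1−j/N}^{1−(j−1)/N} |ψ'(t)|/ψ(t) dt · ψ(1−j/N) + 1, and in particular if |ψ'(t)|/ψ(t)·ψ(1−j/N) ≤ |ψ'(t)| on each subinterval (which holds since ψ is decreasing), then ∑_{j=N/2+1}^{N} 𝒢_j ≤ (σ/α)·(ψ(0) − ψ(1/2)) + 1 ≤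 σ/α + 1. -/
/-!
Each fine-mesh cell contributes `min (c Δφ) 1 · e^{-φ(a)}` with `c = σ/α` and `Δφ = φ(b) - φ(a)`
over the cell `[a, b]`. Dropping the `min` and writing `Δφ = ∫ₐᵇ -ψ'/ψ` gives the integral bound.
Keeping it, the elementary inequality `min (c d) 1 ≤ (c + 1)(1 - e^{-d})` bounds the contribution
by `(c + 1)(ψ(a) - ψ(b))`, which telescopes to `(c + 1)(ψ 0 - ψ (1/2)) ≤ c (ψ 0 - ψ (1/2)) + 1`.
-/

open Real Set Finset

lemma sum_Icc_sub_cast_sub_one (g : ℝ → ℝ) {m n : ℕ} (hmn : m ≤ n) :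
    ∑ j ∈ Finset.Icc (m + 1) n, (g j - g ((j : ℝ) - 1)) = g n - g m := by
  rw [← Finset.Ico_add_one_right_eq_Icc, ← sum_Ico_add' _ m n 1]
  simpa using sum_Ico_sub (fun i : ℕ => g i) hmn

lemma min_mul_le_add_one_mul_one_sub_exp {c d : ℝ} (hc : 0 ≤ c) (hd : 0 ≤ d) :
    min (c * d) 1 ≤ (c + 1) * (1 - exp (-d)) := by
  rcases le_or_gt 1 ((c + 1) * (1 - exp (-d))) with hbig | hsmall
  · exact (min_le_right _ _).trans hbig
  · -- `d ≤ e^d - 1` and `c e^d < c + 1` give `c d ≤ c (1 - e^{-d}) e^d ≤ (c + 1)(1 - e^{-d})`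
    have hd_le : d + 1 ≤ exp d := add_one_le_exp d
    have hinv : exp (-d) * exp d = 1 := by rw [← exp_add, neg_add_cancel, exp_zero]
    have hq : exp (-d) ≤ 1 := exp_le_one_iff.2 (neg_nonpos.2 hd)
    refine (min_le_left _ _).trans ?_
    nlinarith [exp_pos d, exp_pos (-d), mul_nonneg hc (sub_nonneg.2 hq)]

lemma min_mul_sub_mul_exp_le {c x y : ℝ} (hc : 0 ≤ c) (hyx : y ≤ x) :
    min (c * (x - y)) 1 * exp (-y) ≤ (c + 1) * (exp (-y) - exp (-x)) := by
  have hsplit : exp (-x) = exp (-y) * exp (-(x - y)) := by rw [← exp_add]; ring_nf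
  rw [hsplit]
  nlinarith [mul_le_mul_of_nonneg_right
    (min_mul_le_add_one_mul_one_sub_exp hc (sub_nonneg.2 hyx)) (exp_pos (-y)).le]

lemma log_sub_log_le_integral_abs_deriv_div {f : ℝ → ℝ} {a b : ℝ} (hf : ContDiff ℝ 1 f)
    (hpos : ∀ t, 0 < f t) (hab : a ≤ b) :
    log (f a) - log (f b) ≤ ∫ t in a..b, |deriv f t| / f t := by
  have hdiff : Differentiable ℝ f := hf.differentiable one_ne_zero
  have hcont : Continuous (fun t => deriv f t / f t) :=
    (hf.continuous_deriv le_rfl).div hdiff.continuous fun t => (hpos t).ne'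
  have hcont_abs : Continuous (fun t => |deriv f t| / f t) :=
    (hf.continuous_deriv le_rfl).abs.div hdiff.continuous fun t => (hpos t).ne'
  have hftc : ∫ t in a..b, deriv f t / f t = log (f b) - log (f a) :=
    intervalIntegral.integral_eq_sub_of_hasDerivAt
      (fun t _ => (hdiff t).hasDerivAt.log (hpos t).ne') (hcont.intervalIntegrable a b)
  rw [← neg_sub, ← hftc, ← intervalIntegral.integral_neg]
  refine intervalIntegral.integral_mono_on hab (hcont.neg.intervalIntegrable a b)
    (hcont_abs.intervalIntegrable a b) fun t _ => ?_
  rw [← neg_div]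
  exact div_le_div_of_nonneg_right (neg_le_abs _) (hpos t).le

lemma one_sub_cast_half_div_self {N : ℕ} (hN : 0 < N) (hNeven : Even N) :
    1 - ((N / 2 : ℕ) : ℝ) / N = 1 / 2 := by
  have hN0 : (N : ℝ) ≠ 0 := by positivity
  rw [Nat.cast_div (even_iff_two_dvd.1 hNeven) two_ne_zero]
  field_simp
  ring

lemma mesh_cell_mem_Icc {N j : ℕ} (hN : 0 < N) (hNeven : Even N)
    (hj : j ∈ Finset.Icc (N / 2 + 1) N) :
    1 - (j : ℝ) / N ∈ Set.Icc (0 : ℝ) (1 / 2) ∧ 1 - ((j : ℝ) - 1) / N ∈ Set.Icc (0 : ℝ) (1 / 2) ∧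
      1 - (j : ℝ) / N ≤ 1 - ((j : ℝ) - 1) / N := by
  obtain ⟨hj1, hjN⟩ := Finset.mem_Icc.1 hj
  have hN0 : (0 : ℝ) < N := by exact_mod_cast hN
  have hjN' : (j : ℝ) ≤ N := by exact_mod_cast hjN
  have hhalf : (N : ℝ) ≤ 2 * ((j : ℝ) - 1) := by
    have hj2 : N + 2 ≤ 2 * j := by obtain ⟨K, rfl⟩ := hNeven; omega
    have hj2' : (N : ℝ) + 2 ≤ 2 * j := by exact_mod_cast hj2
    linarith
  have hle : (j : ℝ) / N ≤ 1 := div_le_one_of_le₀ hjN' hN0.le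
  have hge : 1 / 2 ≤ ((j : ℝ) - 1) / N := by rw [le_div_iff₀ hN0]; linarith
  have hmono : ((j : ℝ) - 1) / N ≤ (j : ℝ) / N := by gcongr; linarith
  exact ⟨⟨by linarith, by linarith⟩, ⟨by linarith, by linarith⟩, by linarith⟩

lemma mesh_step_div_eq {N j : ℕ} {ε α σ : ℝ} {φ : ℝ → ℝ} {x h : ℕ → ℝ} (hε : ε ≠ 0)
    (hx : ∀ j : ℕ, N / 2 ≤ j → j ≤ N → x j = 1 - (σ * ε / α) * φ (1 - (j : ℝ) / N))
    (hh : ∀ j : ℕ, h j = x j - x (j - 1)) (hj : j ∈ Finset.Icc (N / 2 + 1) N) :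
    h j / ε = σ / α * (φ (1 - ((j : ℝ) - 1) / N) - φ (1 - (j : ℝ) / N)) := by
  obtain ⟨hj1, hjN⟩ := Finset.mem_Icc.1 hj
  rw [hh, hx j (by omega) hjN, hx (j - 1) (by omega) (by omega), Nat.cast_pred (by omega)]
  field_simp
  ring

lemma min_mul_sub_mul_le_integral {ψ φ : ℝ → ℝ} {c a b : ℝ} (hψ : ContDiff ℝ 1 ψ)
    (hψφ : ∀ t, ψ t = exp (-φ t)) (hc : 0 ≤ c) (hab : a ≤ b) :
    min (c * (φ b - φ a)) 1 * ψ a ≤ c * ((∫ t in a..b, |deriv ψ t| / ψ t) * ψ a) := by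
  have hψpos : ∀ t, 0 < ψ t := fun t => hψφ t ▸ exp_pos _
  have hφ : ∀ t, φ t = -log (ψ t) := fun t => by rw [hψφ, log_exp, neg_neg]
  calc min (c * (φ b - φ a)) 1 * ψ a ≤ c * (φ b - φ a) * ψ a :=
        mul_le_mul_of_nonneg_right (min_le_left _ _) (hψpos a).le
    _ = c * ((log (ψ a) - log (ψ b)) * ψ a) := by rw [hφ a, hφ b]; ring
    _ ≤ c * ((∫ t in a..b, |deriv ψ t| / ψ t) * ψ a) := by
        gcongr
        · exact (hψpos a).le
        · exact log_sub_log_le_integral_abs_deriv_div hψ hψpos hab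

theorem sum_G_bounded_general
    (N : ℕ) (hN : 2 ≤ N) (hNeven : Even N)
    (ε α σ : ℝ) (hε : 0 < ε) (hα : 0 < α) (hσ : 0 < σ)
    (φ ψ : ℝ → ℝ) (hψC1 : ContDiff ℝ 1 ψ)
    (hψφ : ∀ t : ℝ, ψ t = Real.exp (-(φ t)))
    (hφ0 : φ 0 = 0)
    (hφmono : MonotoneOn φ (Set.Icc (0 : ℝ) (1 / 2)))
    (x : ℕ → ℝ)
    (hx : ∀ j : ℕ, N / 2 ≤ j → j ≤ N → x j = 1 - (σ * ε / α) * φ (1 - (j : ℝ) / N))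
    (h : ℕ → ℝ) (hh : ∀ j : ℕ, h j = x j - x (j - 1))
    (G : ℕ → ℝ)
    (hG : ∀ j : ℕ, G j = min (h j / ε) 1 * ψ (1 - (j : ℝ) / N)) :
    (∑ j ∈ Finset.Icc (N / 2 + 1) N, G j ≤
      (σ / α) * ∑ j ∈ Finset.Icc (N / 2 + 1) N,
        (∫ t in (1 - (j : ℝ) / N)..(1 - ((j : ℝ) - 1) / N), |deriv ψ t| / ψ t) *
          ψ (1 - (j : ℝ) / N) + 1) ∧
    (∑ j ∈ Finset.Icc (N / 2 + 1) N, G j ≤ (σ / α) * (ψ 0 - ψ (1 / 2)) + 1) ∧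
    (σ / α) * (ψ 0 - ψ (1 / 2)) + 1 ≤ σ / α + 1 := by
  have hN0 : 0 < N := by omega
  have hc : 0 ≤ σ / α := (div_pos hσ hα).le
  have hψ0 : ψ 0 = 1 := by rw [hψφ, hφ0, neg_zero, exp_zero]
  have hψhalf : 0 < ψ (1 / 2) := hψφ (1 / 2) ▸ exp_pos _
  have hG_eq : ∀ j ∈ Finset.Icc (N / 2 + 1) N, G j =
      min (σ / α * (φ (1 - ((j : ℝ) - 1) / N) - φ (1 - (j : ℝ) / N))) 1 * ψ (1 - (j : ℝ) / N) :=
    fun j hj => by rw [hG, mesh_step_div_eq hε.ne' hx hh hj]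
  have hsum_telescope : ∑ j ∈ Finset.Icc (N / 2 + 1) N, G j ≤ (σ / α + 1) * (ψ 0 - ψ (1 / 2)) := by
    calc ∑ j ∈ Finset.Icc (N / 2 + 1) N, G j
        ≤ ∑ j ∈ Finset.Icc (N / 2 + 1) N,
            (σ / α + 1) * (ψ (1 - (j : ℝ) / N) - ψ (1 - ((j : ℝ) - 1) / N)) := by
          refine sum_le_sum fun j hj => ?_
          obtain ⟨haI, hbI, hab⟩ := mesh_cell_mem_Icc hN0 hNeven hj
          rw [hG_eq j hj, hψφ, hψφ]
          exact min_mul_sub_mul_exp_le hc (hφmono haI hbI hab)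
      _ = (σ / α + 1) * (ψ 0 - ψ (1 / 2)) := by
          rw [← mul_sum, sum_Icc_sub_cast_sub_one (fun t => ψ (1 - t / N)) (Nat.div_le_self N 2),
            one_sub_cast_half_div_self hN0 hNeven, div_self (by positivity), sub_self]
  refine ⟨?_, by nlinarith, by nlinarith⟩
  calc ∑ j ∈ Finset.Icc (N / 2 + 1) N, G j
      ≤ ∑ j ∈ Finset.Icc (N / 2 + 1) N, σ / α * ((∫ t in (1 - (j : ℝ) / N)..(1 - ((j : ℝ) - 1) / N),
          |deriv ψ t| / ψ t) * ψ (1 - (j : ℝ) / N)) := by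
        refine sum_le_sum fun j hj => ?_
        rw [hG_eq j hj]
        exact min_mul_sub_mul_le_integral hψC1 hψφ hc (mesh_cell_mem_Icc hN0 hNeven hj).2.2
    _ ≤ _ := by rw [← mul_sum]; linarith

/-- Summability bound `∑ 𝒢_j ≤ σ/α + 1` for layer-adapted meshes. -/
theorem sum_G_bounded
    (N : ℕ) (hN : 2 ≤ N) (hNeven : Even N)
    (ε α σ : ℝ) (hε : 0 < ε) (hα : 0 < α) (hσ : 0 < σ)
    (φ ψ : ℝ → ℝ) (hψC1 : ContDiff ℝ 1 ψ)
    (hψφ : ∀ t : ℝ, ψ t = Real.exp (-(φ t)))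
    (hφ0 : φ 0 = 0)
    (hφmono : MonotoneOn φ (Set.Icc (0 : ℝ) (1 / 2)))
    (hψdec : AntitoneOn ψ (Set.Icc (0 : ℝ) (1 / 2)))
    (hψrange : ∀ t ∈ Set.Icc (0 : ℝ) (1 / 2), ψ t ∈ Set.Ioc (0 : ℝ) 1)
    (x : ℕ → ℝ)
    (hx : ∀ j : ℕ, N / 2 ≤ j → j ≤ N → x j = 1 - (σ * ε / α) * φ (1 - (j : ℝ) / N))
    (h : ℕ → ℝ) (hh : ∀ j : ℕ, h j = x j - x (j - 1))
    (G : ℕ → ℝ)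
    (hG : ∀ j : ℕ, G j = min (h j / ε) 1 * ψ (1 - (j : ℝ) / N)) :
    (∑ j ∈ Finset.Icc (N / 2 + 1) N, G j ≤
      (σ / α) * ∑ j ∈ Finset.Icc (N / 2 + 1) N,
        (∫ t in (1 - (j : ℝ) / N)..(1 - ((j : ℝ) - 1) / N), |deriv ψ t| / ψ t) *
          ψ (1 - (j : ℝ) / N) + 1) ∧
    (∑ j ∈ Finset.Icc (N / 2 + 1) N, G j ≤ (σ / α) * (ψ 0 - ψ (1 / 2)) + 1) ∧
    (σ / α) * (ψ 0 - ψ (1 / 2)) + 1 ≤ σ / α + 1 :=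
  sum_G_bounded_general N hN hNeven ε α σ hε hα hσ φ ψ hψC1 hψφ hφ0 hφmono x hx h hh G hG
end

section
/- Let p_ε: [0,1] → ℝ satisfy |p_ε(x)| ≤ e^{−α(1−x)/ε} with α, ε > 0, and let 0 = x_0 < x_1 < ⋯ < x_{N/2} = 1−τ be a partition of [0,1−τ] with τ = (σε/α)ln N, N ≥ 2, σ ≥ 1. Then ∑_{j=1}^{N/2} [ ‖p_ε‖²_{L²(I_j)} + h_j·p_ε(x_{j−1})² ] ≤ C·ε·N^{−2σ} for a constant C depending only on α, where I_j = [x_{j−1},x_j] and h_j = x_j − x_{j−1}. -/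
open Real Set Finset intervalIntegral

/-!
Squaring the pointwise bound gives `p² ≤ w` with the increasing weight `w(y) = e^{-2α(1-y)/ε}`.
On each cell, `∫ p²` and `h_j p(x_{j-1})²` are both at most `∫_{I_j} w` (the latter because `w` is
increasing), so the sum is at most `2 ∫_0^{1-τ} w ≤ (ε/α) e^{-2ατ/ε} = (ε/α) N^{-2σ}`.
-/

lemma sq_le_exp_two_mul_of_abs_le_exp {a t : ℝ} (h : |a| ≤ exp t) : a ^ 2 ≤ exp (2 * t) := by
  calc a ^ 2 = |a| ^ 2 := (sq_abs a).symm
    _ ≤ exp t ^ 2 := pow_le_pow_left₀ (abs_nonneg a) h 2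
    _ = exp (2 * t) := by rw [sq, ← exp_add, two_mul]

lemma integral_sq_add_mul_sq_le_two_mul_integral {g w : ℝ → ℝ} {a b : ℝ} (hab : a ≤ b)
    (hw : IntervalIntegrable w MeasureTheory.volume a b) (hw_mono : MonotoneOn w (Icc a b))
    (hgw : ∀ y ∈ Icc a b, g y ^ 2 ≤ w y) :
    (∫ y in a..b, g y ^ 2) + (b - a) * g a ^ 2 ≤ 2 * ∫ y in a..b, w y := by
  have ha : a ∈ Icc a b := left_mem_Icc.2 hab
  have h_sq : (∫ y in a..b, g y ^ 2) ≤ ∫ y in a..b, w y := by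
    by_cases hg : IntervalIntegrable (fun y => g y ^ 2) MeasureTheory.volume a b
    · exact integral_mono_on hab hg hw hgw
    · rw [integral_undef hg]
      exact integral_nonneg hab fun y hy => (sq_nonneg _).trans (hgw y hy)
  have h_left : (b - a) * g a ^ 2 ≤ ∫ y in a..b, w y :=
    calc (b - a) * g a ^ 2 ≤ (b - a) * w a := mul_le_mul_of_nonneg_left (hgw a ha) (by linarith)
      _ = ∫ _ in a..b, w a := by simp
      _ ≤ ∫ y in a..b, w y :=
        integral_mono_on hab intervalIntegrable_const hw fun y hy => hw_mono ha hy hy.1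
  linarith

lemma sum_Icc_integral_adjacent {w : ℝ → ℝ} (x : ℕ → ℝ)
    (hw : ∀ a b, IntervalIntegrable w MeasureTheory.volume a b) (M : ℕ) :
    ∑ j ∈ Icc 1 M, ∫ y in x (j - 1)..x j, w y = ∫ y in x 0..x M, w y := by
  induction M with
  | zero => simp
  | succ M ih =>
    rw [sum_Icc_succ_top (by omega), ih, Nat.add_sub_cancel,
      integral_add_adjacent_intervals (hw _ _) (hw _ _)]

lemma integral_exp_mul_sub_le {c : ℝ} (hc : 0 < c) (d a b : ℝ) :
    ∫ y in a..b, exp (c * y - d) ≤ exp (c * b - d) / c := by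
  rw [integral_comp_mul_sub (fun y => exp y) hc.ne', integral_exp, smul_eq_mul,
    inv_mul_eq_div]
  gcongr
  linarith [exp_pos (c * a - d)]

lemma exp_neg_mul_boundary_layer_width {α ε σ : ℝ} {N : ℕ} (hα : 0 < α) (hε : 0 < ε)
    (hN : 0 < N) :
    exp (-(2 * α / ε) * ((σ * ε / α) * log N)) = (N : ℝ) ^ (-(2 * σ)) := by
  rw [rpow_def_of_pos (by exact_mod_cast hN)]
  congr 1
  field_simp

lemma two_mul_integral_exp_layer_le {α ε σ τ : ℝ} {N : ℕ} (hα : 0 < α) (hε : 0 < ε)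
    (hN : 0 < N) (hτ : τ = (σ * ε / α) * log N) (a : ℝ) :
    2 * ∫ y in a..1 - τ, exp (2 * α / ε * y - 2 * α / ε) ≤ 1 / α * ε * (N : ℝ) ^ (-(2 * σ)) :=
  calc _ ≤ 2 * (exp (2 * α / ε * (1 - τ) - 2 * α / ε) / (2 * α / ε)) := by
        gcongr; exact integral_exp_mul_sub_le (by positivity) _ _ _
    _ = 1 / α * ε * (N : ℝ) ^ (-(2 * σ)) := by
      rw [← exp_neg_mul_boundary_layer_width hα hε hN, ← hτ]
      field_simp
      ring_nf

/-- Coarse-region bound for `∑_j [‖p_ε‖²_{L²(I_j)} + h_j p_ε(x_{j-1})²] ≤ C ε N^{-2σ}`. -/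
theorem coarse_region_projection_data_bound
    (α : ℝ) (hα : 0 < α) :
    ∃ C > 0, ∀ (ε σ τ : ℝ) (N : ℕ) (x : ℕ → ℝ) (p : ℝ → ℝ),
      0 < ε → 1 ≤ σ → 2 ≤ N →
      τ = (σ * ε / α) * Real.log N →
      x 0 = 0 → x (N / 2) = 1 - τ →
      (∀ i j : ℕ, i < j → j ≤ N / 2 → x i < x j) →
      (∀ y ∈ Set.Icc (0 : ℝ) 1, |p y| ≤ Real.exp (-α * (1 - y) / ε)) →
      ∑ j ∈ Finset.Icc 1 (N / 2),
          ((∫ y in (x (j - 1))..(x j), (p y) ^ 2) + (x j - x (j - 1)) * (p (x (j - 1))) ^ 2)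
        ≤ C * ε * (N : ℝ) ^ (-(2 * σ)) := by
  refine ⟨1 / α, by positivity, fun ε σ τ N x p hε hσ hN hτ hx0 hxM hx hp => ?_⟩
  set c := 2 * α / ε
  have hτ0 : 0 ≤ τ := by
    rw [hτ]
    have hN1 : (1 : ℝ) ≤ N := by exact_mod_cast hN.trans' one_le_two
    exact mul_nonneg (div_nonneg (mul_nonneg (by linarith) hε.le) hα.le) (log_nonneg hN1)
  have hx_mono : ∀ i j, i ≤ j → j ≤ N / 2 → x i ≤ x j := fun i j hij hj =>
    hij.eq_or_lt.elim (fun h => h ▸ le_rfl) fun h => (hx i j h hj).le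
  have hw : ∀ a b, IntervalIntegrable (fun y => exp (c * y - c)) MeasureTheory.volume a b :=
    fun a b => (by fun_prop : Continuous fun y => exp (c * y - c)).intervalIntegrable a b
  have cell : ∀ j ∈ Finset.Icc 1 (N / 2),
      (∫ y in x (j - 1)..x j, p y ^ 2) + (x j - x (j - 1)) * p (x (j - 1)) ^ 2
        ≤ 2 * ∫ y in x (j - 1)..x j, exp (c * y - c) := by
    intro j hj
    obtain ⟨hj1, hjM⟩ := Finset.mem_Icc.1 hj
    refine integral_sq_add_mul_sq_le_two_mul_integral (hx _ _ (by omega) hjM).le (hw _ _)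
      (fun y _ z _ hyz => exp_le_exp.2 (by gcongr)) fun y hy => ?_
    have hy01 : y ∈ Icc (0 : ℝ) 1 :=
      ⟨hx0 ▸ (hx_mono 0 (j - 1) (by omega) (by omega)).trans hy.1,
        hy.2.trans ((hx_mono j _ hjM le_rfl).trans (by linarith))⟩
    convert sq_le_exp_two_mul_of_abs_le_exp (hp y hy01) using 2
    simp only [c]
    field_simp
    ring
  calc _ ≤ ∑ j ∈ Icc 1 (N / 2), 2 * ∫ y in x (j - 1)..x j, exp (c * y - c) := sum_le_sum cell
    _ = 2 * ∫ y in x 0..x (N / 2), exp (c * y - c) := by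
      rw [← mul_sum, sum_Icc_integral_adjacent x hw]
    _ ≤ 1 / α * ε * (N : ℝ) ^ (-(2 * σ)) := by
      rw [hxM]; exact two_mul_integral_exp_layer_le hα hε (by omega) hτ _
end
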